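/- Let βℕ be the Stone–Čech compactification of the discrete space ℕ and let X ⊆ βℕ be an infinite subspace which is pseudocompact (every continuous function X → ℝ is bounded). Then there exists a countable set A ⊆ X such that there is no continuous mapping φ : C_p*(A) → C_p(X) with φ(y)|_A = y for every y ∈ C_p*(A). -/

import Mathlib

open Set Topology

/-- `C_p(X)`: the continuous real-valued functions on `X`, topologized by pointwise
convergence (i.e. as a subspace of `X → ℝ` with the product topology). -/
abbrev Cp (X : Type*) [TopologicalSpace X] : Type _ := {f : X → ℝ // Continuous f}

/-- `C_p*(X)`: the bounded continuous real-valued functions on `X`, topologized by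
pointwise convergence. -/
abbrev CpStar (X : Type*) [TopologicalSpace X] : Type _ :=
  {f : X → ℝ // Continuous f ∧ ∃ M : ℝ, ∀ x, |f x| ≤ M}

/-- A set is functionally open (a cozero set) if it is the cozero set of a
continuous real-valued function. -/
def FunctionallyOpen {X : Type*} [TopologicalSpace X] (U : Set X) : Prop :=
  ∃ f : X → ℝ, Continuous f ∧ U = f ⁻¹' ({0}ᶜ)

/-- A subset `A` is strongly functionally discrete in `X` if there is a family of
functionally open sets `G a ∋ a` (for `a ∈ A`) which is discrete in `X`: every point
of `X` has a neighborhood meeting `G a` for at most one `a ∈ A`. -/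
def StronglyFunctionallyDiscrete {X : Type*} [TopologicalSpace X] (A : Set X) : Prop :=
  ∃ G : A → Set X,
    (∀ a : A, (a : X) ∈ G a) ∧
    (∀ a : A, FunctionallyOpen (G a)) ∧
    (∀ x : X, ∃ V ∈ 𝓝 x, {a : A | (V ∩ G a).Nonempty}.Subsingleton)

/-!
Embed `ℕ` in `X` as a discrete set `A = {e 0, e 1, …}` and suppose `φ` is a continuous
extender. The indicators `y j` of the tails `{e k | j ≤ k}` converge pointwise to `0` on `A`,
so `g j = φ (y j)` converges pointwise to `g = φ 0`, while `g = 0` and `g j = 1` at every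
`e k` with `j ≤ k`. The cozero sets `O m = {g < 1/4, g i > 3/4 for i < m}` decrease and
`e m ∈ O m`. In a pseudocompact space such a sequence has a common cluster point `z`, since
otherwise it is locally finite and bumps of height `m` on `O m` add up to an unbounded
continuous function. But then `g j z ≥ 3/4` for all `j` while `g j z → g z ≤ 1/4`.
-/

open Filter Function

def Pseudocompact (X : Type*) [TopologicalSpace X] : Prop :=
  ∀ f : X → ℝ, Continuous f → ∃ M : ℝ, ∀ x, |f x| ≤ M

section

variable {X : Type*} [TopologicalSpace X]

theorem functionallyOpen_iff {U : Set X} :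
    FunctionallyOpen U ↔ ∃ f : X → ℝ, Continuous f ∧ support f = U := by
  simp only [FunctionallyOpen, eq_comm (a := U)]
  rfl

theorem functionallyOpen_univ : FunctionallyOpen (univ : Set X) :=
  functionallyOpen_iff.2 ⟨1, continuous_const, support_const one_ne_zero⟩

theorem FunctionallyOpen.inter {U V : Set X} (hU : FunctionallyOpen U) (hV : FunctionallyOpen V) :
    FunctionallyOpen (U ∩ V) := by
  obtain ⟨f, hf, rfl⟩ := functionallyOpen_iff.1 hU
  obtain ⟨g, hg, rfl⟩ := functionallyOpen_iff.1 hV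
  exact functionallyOpen_iff.2 ⟨f * g, hf.mul hg, support_mul f g⟩

theorem FunctionallyOpen.biInter_finset {ι : Type*} (s : Finset ι) {U : ι → Set X}
    (hU : ∀ i ∈ s, FunctionallyOpen (U i)) : FunctionallyOpen (⋂ i ∈ s, U i) := by
  classical
  induction s using Finset.induction_on with
  | empty => simpa using functionallyOpen_univ
  | insert i s _ ih =>
    rw [Finset.set_biInter_insert]
    exact (hU i (s.mem_insert_self i)).inter (ih fun j hj => hU j (Finset.mem_insert_of_mem hj))

theorem functionallyOpen_setOf_lt {f g : X → ℝ} (hf : Continuous f) (hg : Continuous g) :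
    FunctionallyOpen {x | f x < g x} := by
  refine functionallyOpen_iff.2 ⟨fun x => max (g x - f x) 0, by fun_prop, ?_⟩
  ext x
  simp

theorem Antitone.locallyFinite_of_iInter_closure_eq_empty {U : ℕ → Set X} (hU : Antitone U)
    (h : ⋂ n, closure (U n) = ∅) : LocallyFinite U := by
  intro x
  obtain ⟨n, hn⟩ : ∃ n, x ∉ closure (U n) := by
    by_contra! hx
    exact notMem_empty x (h ▸ mem_iInter.2 hx)
  refine ⟨(closure (U n))ᶜ, isClosed_closure.isOpen_compl.mem_nhds hn,
    (finite_lt_nat n).subset fun m ⟨y, hyU, hy⟩ => ?_⟩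
  by_contra hnm
  exact hy (subset_closure (hU (not_lt.1 hnm) hyU))

namespace Pseudocompact

variable (hX : Pseudocompact X)
include hX

theorem exists_forall_le_of_locallyFinite {ι : Type*} {f : ι → X → ℝ}
    (hc : ∀ i, Continuous (f i)) (hnn : ∀ i x, 0 ≤ f i x)
    (hf : LocallyFinite fun i => support (f i)) : ∃ B, ∀ i x, f i x ≤ B := by
  obtain ⟨B, hB⟩ := hX _ (continuous_finsum hc hf)
  exact ⟨B, fun i x => (single_le_finsum i (hf.point_finite x) fun j => hnn j x).trans
    ((le_abs_self _).trans (hB x))⟩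

theorem nonempty_iInter_closure {U : ℕ → Set X} (hU : Antitone U)
    (hfo : ∀ n, FunctionallyOpen (U n)) (hne : ∀ n, (U n).Nonempty) :
    (⋂ n, closure (U n)).Nonempty := by
  by_contra h
  have hlf := hU.locallyFinite_of_iInter_closure_eq_empty (not_nonempty_iff_eq_empty.1 h)
  choose u hu hUu using fun n => functionallyOpen_iff.1 (hfo n)
  choose x hx using hne
  have hux : ∀ n, u n (x n) ≠ 0 := fun n => by simpa [← hUu n] using hx n
  set f : ℕ → X → ℝ := fun n y => n * |u n y| / |u n (x n)|
  have hsupp : ∀ n, support (f n) ⊆ U n := fun n y hy => by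
    rw [← hUu n]
    contrapose! hy
    simp [f, notMem_support.1 hy]
  obtain ⟨B, hB⟩ := hX.exists_forall_le_of_locallyFinite (f := f) (fun n => by fun_prop)
    (fun n y => by positivity) (hlf.subset hsupp)
  obtain ⟨n, hn⟩ := exists_nat_gt B
  have hfn : f n (x n) = n := by simp [f, mul_div_assoc, hux n]
  linarith [hB n (x n)]

theorem false_of_tendsto_of_eq_zero_of_eq_one {g : X → ℝ} {gs : ℕ → X → ℝ}
    (hg : Continuous g) (hgs : ∀ n, Continuous (gs n))
    (htend : ∀ x, Tendsto (fun n => gs n x) atTop (𝓝 (g x))) {a : ℕ → X}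
    (hga : ∀ k, g (a k) = 0) (hgsa : ∀ j k, j ≤ k → gs j (a k) = 1) : False := by
  set O : ℕ → Set X := fun m =>
    {x | g x < 1 / 4} ∩ ⋂ i ∈ Finset.range m, {x | 3 / 4 < gs i x}
  have hanti : Antitone O := fun m n hmn =>
    inter_subset_inter_right _ (biInter_subset_biInter_left (by simpa using hmn))
  have hfo : ∀ m, FunctionallyOpen (O m) := fun m =>
    (functionallyOpen_setOf_lt hg continuous_const).inter
      (.biInter_finset _ fun i _ => functionallyOpen_setOf_lt continuous_const (hgs i))
  have hne : ∀ m, (O m).Nonempty := fun m =>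
    ⟨a m, by simp +contextual [O, hga, hgsa, le_of_lt]; norm_num⟩
  obtain ⟨z, hz⟩ := hX.nonempty_iInter_closure hanti hfo hne
  rw [mem_iInter] at hz
  have hgz : g z ≤ 1 / 4 :=
    closure_lt_subset_le hg continuous_const (closure_mono inter_subset_left (hz 0))
  have hgsz : ∀ j, 3 / 4 ≤ gs j z := fun j =>
    closure_lt_subset_le continuous_const (hgs j) <| closure_mono
      (inter_subset_right.trans (biInter_subset_of_mem (Finset.self_mem_range_succ j)))
      (hz (j + 1))
  linarith [ge_of_tendsto' (htend z) hgsz]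

end Pseudocompact

namespace Topology.IsEmbedding

variable {e : ℕ → X} (he : IsEmbedding e)

noncomputable def tailIndicator (j : ℕ) : CpStar (range e) :=
  ⟨fun p => if j ≤ he.toHomeomorph.symm p then 1 else 0,
    (continuous_of_discreteTopology (f := fun n : ℕ => if j ≤ n then (1 : ℝ) else 0)).comp
      he.toHomeomorph.symm.continuous,
    1, fun p => by dsimp only; split_ifs <;> norm_num⟩

theorem tailIndicator_apply (j k : ℕ) :
    (he.tailIndicator j).1 ⟨e k, mem_range_self k⟩ = if j ≤ k then 1 else 0 := by
  simp [tailIndicator, he.toHomeomorph_symm_apply]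

theorem tendsto_tailIndicator :
    Tendsto he.tailIndicator atTop (𝓝 ⟨0, continuous_const, 0, by simp⟩) := by
  refine tendsto_subtype_rng.2 (tendsto_pi_nhds.2 fun p => tendsto_const_nhds.congr' ?_)
  filter_upwards [eventually_gt_atTop (he.toHomeomorph.symm p)] with j hj
  simp [tailIndicator, not_le.2 hj]

end Topology.IsEmbedding

theorem Pseudocompact.not_exists_extender (hX : Pseudocompact X) {e : ℕ → X}
    (he : IsEmbedding e) :
    ¬ ∃ φ : CpStar (range e) → Cp X, Continuous φ ∧
      ∀ y : CpStar (range e), ∀ a : range e, (φ y).1 a = y.1 a := by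
  rintro ⟨φ, hφc, hφe⟩
  have htend := (hφc.tendsto _).comp he.tendsto_tailIndicator
  refine hX.false_of_tendsto_of_eq_zero_of_eq_one (φ _).2 (fun j => (φ (he.tailIndicator j)).2)
    (fun x => ((continuous_apply x).comp continuous_subtype_val).continuousAt.tendsto.comp htend)
    (a := e) (fun k => hφe _ ⟨e k, mem_range_self k⟩) (fun j k hjk => ?_)
  exact (hφe _ ⟨e k, mem_range_self k⟩).trans ((he.tailIndicator_apply j k).trans (if_pos hjk))

end

/-- If `X ⊆ βℕ` is an infinite pseudocompact subspace, then there is a countable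
`A ⊆ X` admitting no continuous extender `C_p*(A) → C_p(X)`. -/
theorem stmt_11 (X : Set (StoneCech ℕ)) (hinf : X.Infinite)
    (hpc : ∀ f : X → ℝ, Continuous f → ∃ M : ℝ, ∀ x, |f x| ≤ M) :
    ∃ A : Set X, A.Countable ∧
      ¬ ∃ φ : CpStar A → Cp X, Continuous φ ∧
        ∀ y : CpStar A, ∀ a : A, (φ y).1 a = y.1 a := by
  have : Infinite X := hinf.to_subtype
  obtain ⟨e, he⟩ := exists_topology_isEmbedding_nat X
  exact ⟨range e, countable_range e, Pseudocompact.not_exists_extender hpc he⟩
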